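/- Let P ∈ ℚ[X_1,…,X_n] be homogeneous and v ∈ ℚ^n. Then Ψ_ℓ(σ,P,Q,v) = (−1)^n·sign(det σ)·Σ_r P_r(σ)/((r_1+1)!⋯(r_n+1)!·ℓ^{r_1+…+r_n}) · Σ_{x∈ℤ^n/σ_ℓℤ^n} 𝐁_{(1+r_1,…,1+r_n)}^{L,−x̄_1}(σ_ℓ^{−1}(x+π_ℓ v), σ^{−1}Q), where r runs over n-tuples of nonnegative integers with Σr_j = deg P, x runs over representatives in ℤ^n of ℤ^n/σ_ℓℤ^n, and x̄_1 denotes x_1 mod ℓ. -/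

import Mathlib

/-! Both sides share the sum `∑ₓ 𝐁_e(σ_ℓ⁻¹(x + π_ℓ v))`, so it suffices to match the smoothing
terms. Since `π_ℓ σ = ℓ σ_ℓ`, the vectors `x + σ_ℓ y`, with `x` running over representatives of
`ℤⁿ/σ_ℓℤⁿ` and `y ∈ {0,…,ℓ-1}ⁿ`, represent `ℤⁿ/π_ℓσℤⁿ`; the congruence `L(y) = -x̄₁` says that
`x + σ_ℓ y = π_ℓ w` for an integral `w`, and these `w` represent `ℤⁿ/σℤⁿ`. For such a pair
`σ⁻¹(w + v) = (σ_ℓ⁻¹(x + π_ℓ v) + y)/ℓ`, and `𝐁_e` is `ℤⁿ`-periodic. -/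

open scoped BigOperators
open scoped Classical

/-- The periodic Bernoulli function `B_k`, restricted to rational arguments
(where it takes rational values). -/
noncomputable def periodicBernoulliQ (k : ℕ) (x : ℚ) : ℚ :=
  if k = 1 then (if ∃ z : ℤ, x = (z : ℚ) then 0 else Int.fract x - 1 / 2)
  else Polynomial.eval (Int.fract x) (Polynomial.bernoulli k)

/-- The sign (±1) of a nonzero real number, as a rational number. -/
noncomputable def sgnQ (t : ℝ) : ℚ := if 0 < t then 1 else -1

/-- The set `J(e,v) = {j : e_j = 1 and v_j ∈ ℤ}`. -/
noncomputable def Jset {n : ℕ} (e : Fin n → ℕ) (v : Fin n → ℚ) : Finset (Fin n) :=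
  Finset.univ.filter (fun j => e j = 1 ∧ ∃ z : ℤ, v j = (z : ℚ))

/-- `𝐁_e(v,Q)`, at rational arguments (where it takes rational values). -/
noncomputable def BBQ {n m : ℕ} (Q : Matrix (Fin m) (Fin n) ℝ) (e : Fin n → ℕ)
    (v : Fin n → ℚ) : ℚ :=
  (1 / (m : ℚ)) * ∑ i : Fin m,
    (∏ j ∈ Jset e v, sgnQ (Q i j) / 2) *
      ∏ j ∈ (Jset e v)ᶜ, periodicBernoulliQ (e j) (v j)

/-- `𝐁_e^{L,z}(x,Q)` at rational arguments, where
`L(y) = a_1 y_1 + ⋯ + a_n y_n mod ℓ`. -/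
noncomputable def BBLz {n m : ℕ} (ℓ : ℕ) (a : Fin n → ℤ)
    (Q : Matrix (Fin m) (Fin n) ℝ) (e : Fin n → ℕ) (z : ZMod ℓ) (x : Fin n → ℚ) : ℚ :=
  BBQ Q e x - (ℓ : ℚ) ^ ((1 : ℤ) - (n : ℤ) + ∑ j, (e j : ℤ)) *
    ∑ y : Fin n → Fin ℓ,
      if (∑ j, (a j : ZMod ℓ) * ((y j : ℕ) : ZMod ℓ)) = z then
        BBQ Q e (fun j => (x j + ((y j : ℕ) : ℚ)) / (ℓ : ℚ)) else 0

/-- `reps` is a complete system of representatives of `ℤ^n/Mℤ^n`. -/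
def IsRepSystem {n : ℕ} (M : Matrix (Fin n) (Fin n) ℤ) {ι : Type} [Fintype ι]
    (reps : ι → Fin n → ℤ) : Prop :=
  ∀ w : Fin n → ℤ, ∃! i : ι, ∃ t : Fin n → ℤ, w = reps i + M.mulVec t

/-- `σ_ℓ = π_ℓ·(1/ℓ)·σ`: keep the first row of `σ`, divide the other rows by `ℓ`. -/
def sigmaL {n : ℕ} [NeZero n] (ℓ : ℕ) (σ : Matrix (Fin n) (Fin n) ℤ) :
    Matrix (Fin n) (Fin n) ℤ :=
  Matrix.of fun i j => if i = 0 then σ i j else σ i j / (ℓ : ℤ)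

/-- An integer matrix viewed as a rational matrix. -/
def matQ {n : ℕ} (σ : Matrix (Fin n) (Fin n) ℤ) : Matrix (Fin n) (Fin n) ℚ :=
  σ.map (Int.cast)

/-- `σ⁻¹Q = Q·(σ⁻¹)ᵀ`: the action of `σ⁻¹` on the `m`-tuple of linear forms `Q`. -/
noncomputable def Qtransf {n m : ℕ} (σ : Matrix (Fin n) (Fin n) ℤ)
    (Q : Matrix (Fin m) (Fin n) ℝ) : Matrix (Fin m) (Fin n) ℝ :=
  Q * (((matQ σ)⁻¹).map (Rat.cast)).transpose

/-- `π_ℓ v`: multiply the first coordinate of `v` by `ℓ`. -/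
def piLvec {n : ℕ} [NeZero n] (ℓ : ℕ) (v : Fin n → ℚ) : Fin n → ℚ :=
  fun j => if j = 0 then (ℓ : ℚ) * v 0 else v j

/-- The smoothed Dedekind sum `D_ℓ(σ,e,Q,v)`, computed with respect to systems of
representatives `reps₁` of `ℤ^n/σ_ℓℤ^n` and `reps₂` of `ℤ^n/σℤ^n`. -/
noncomputable def Dl {n m : ℕ} [NeZero n] (ℓ : ℕ) (σ : Matrix (Fin n) (Fin n) ℤ)
    (e : Fin n → ℕ) (Q : Matrix (Fin m) (Fin n) ℝ) (v : Fin n → ℚ)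
    {ι κ : Type} [Fintype ι] [Fintype κ]
    (reps₁ : ι → Fin n → ℤ) (reps₂ : κ → Fin n → ℤ) : ℚ :=
  (∑ i : ι, BBQ (Qtransf σ Q) e
      ((matQ (sigmaL ℓ σ))⁻¹.mulVec (fun j => (reps₁ i j : ℚ) + piLvec ℓ v j)))
  - (ℓ : ℚ) ^ ((1 : ℤ) - (n : ℤ) + ∑ j, (e j : ℤ)) *
    ∑ i : κ, BBQ (Qtransf σ Q) e ((matQ σ)⁻¹.mulVec (fun j => (reps₂ i j : ℚ) + v j))

/-- The coefficient `P_r(σ)`, defined by `P(Xσᵗ) = Σ_r P_r(σ)·X^r/r!`. -/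
noncomputable def Pcoeff {n : ℕ} (σ : Matrix (Fin n) (Fin n) ℤ)
    (P : MvPolynomial (Fin n) ℚ) (r : Fin n → ℕ) : ℚ :=
  ((∏ j, Nat.factorial (r j) : ℕ) : ℚ) *
    MvPolynomial.coeff (Finsupp.equivFunOnFinite.symm r)
      (MvPolynomial.aeval
        (fun i => ∑ j, MvPolynomial.C ((σ i j : ℤ) : ℚ) * MvPolynomial.X j) P)

/-- The smoothed Eisenstein cocycle value
`Ψ_ℓ(σ,P,Q,v) = (−1)^n·sign(det σ)·Σ_r P_r(σ)/((r+𝟙)!·ℓ^{|r|})·D_ℓ(σ,𝟙+r,Q,v)` for a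
homogeneous `P` of degree `d`, computed with respect to representative systems. -/
noncomputable def PsiL {n m : ℕ} [NeZero n] (ℓ : ℕ) (σ : Matrix (Fin n) (Fin n) ℤ)
    (P : MvPolynomial (Fin n) ℚ) (d : ℕ) (Q : Matrix (Fin m) (Fin n) ℝ) (v : Fin n → ℚ)
    {ι κ : Type} [Fintype ι] [Fintype κ]
    (reps₁ : ι → Fin n → ℤ) (reps₂ : κ → Fin n → ℤ) : ℚ :=
  (-1 : ℚ) ^ n * ((σ.det.sign : ℤ) : ℚ) *
    ∑ r ∈ Fintype.piFinset (fun _ : Fin n => Finset.range (d + 1)),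
      if (∑ j, r j) = d then
        Pcoeff σ P r /
            (((∏ j, Nat.factorial (r j + 1) : ℕ) : ℚ) * (ℓ : ℚ) ^ (∑ j, r j)) *
          Dl ℓ σ (fun j => 1 + r j) Q v reps₁ reps₂
      else 0

open Matrix

theorem existsUnique_fin_add_mul {ℓ : ℕ} (hℓ : ℓ ≠ 0) (t : ℤ) :
    ∃! y : Fin ℓ, ∃ s : ℤ, t = y + ℓ * s := by
  have hℓ' : (0 : ℤ) < ℓ := by exact_mod_cast Nat.pos_of_ne_zero hℓ
  have hnonneg := Int.emod_nonneg t hℓ'.ne'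
  refine ⟨⟨(t % ℓ).toNat, by have := Int.emod_lt_of_pos t hℓ'; omega⟩, ⟨t / ℓ, ?_⟩, ?_⟩
  · simp only [Int.toNat_of_nonneg hnonneg, Int.emod_add_mul_ediv]
  · rintro y ⟨s, rfl⟩
    have : ((y : ℤ) + ℓ * s) % ℓ = y := by
      rw [Int.add_mul_emod_self_left, Int.emod_eq_of_lt (by omega) (by omega)]
    ext
    simp only [this, Int.toNat_natCast]

namespace IsRepSystem

variable {n : ℕ} {ι κ : Type} [Fintype ι] [Fintype κ]

theorem sum_eq {M : Matrix (Fin n) (Fin n) ℤ} {r : ι → Fin n → ℤ} {r' : κ → Fin n → ℤ}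
    (h : IsRepSystem M r) (h' : IsRepSystem M r') {β : Type*} [AddCommMonoid β]
    {f : (Fin n → ℤ) → β} (hf : ∀ w t, f (w + M *ᵥ t) = f w) :
    ∑ i, f (r i) = ∑ k, f (r' k) := by
  choose e t ht using fun i => (h' (r i)).exists
  have he : ∀ i k, (∃ t, r i = r' k + M *ᵥ t) → e i = k := fun i k hk =>
    (h' (r i)).unique ⟨t i, ht i⟩ hk
  refine Fintype.sum_bijective e ⟨fun i j hij => ?_, fun k => ?_⟩ _ _ fun i => ?_
  · refine (h (r i)).unique ⟨0, by simp⟩ ⟨t i - t j, ?_⟩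
    rw [ht i, ht j, hij, mulVec_sub]
    abel
  · obtain ⟨i, ⟨s, hs⟩, -⟩ := h (r' k)
    exact ⟨i, he i k ⟨-s, by rw [hs, mulVec_neg]; abel⟩⟩
  · rw [ht i, hf]

theorem smul_digits {M : Matrix (Fin n) (Fin n) ℤ} {r : ι → Fin n → ℤ} (h : IsRepSystem M r)
    (hM : Function.Injective M.mulVec) {ℓ : ℕ} (hℓ : ℓ ≠ 0) :
    IsRepSystem ((ℓ : ℤ) • M)
      (fun p : ι × (Fin n → Fin ℓ) => r p.1 + M *ᵥ fun j => (p.2 j : ℤ)) := by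
  intro w
  obtain ⟨i, ⟨t, rfl⟩, hi⟩ := h w
  choose y s hys using fun j => (existsUnique_fin_add_mul hℓ (t j)).exists
  have decomp : ∀ (y : Fin n → Fin ℓ) (s : Fin n → ℤ),
      M *ᵥ (fun j => (y j : ℤ)) + ((ℓ : ℤ) • M) *ᵥ s = M *ᵥ fun j => y j + ℓ * s j := by
    intro y s
    rw [smul_mulVec, ← mulVec_smul, ← mulVec_add]
    rfl
  refine ⟨(i, y), ⟨s, ?_⟩, ?_⟩
  · rw [add_assoc, decomp, ← funext hys]
  · rintro ⟨i', y'⟩ ⟨s', hs'⟩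
    rw [add_assoc, decomp] at hs'
    obtain rfl : i' = i := hi i' ⟨_, hs'⟩
    have ht : t = fun j => y' j + ℓ * s' j := hM (add_left_cancel hs')
    refine Prod.ext rfl (funext fun j => ?_)
    exact (existsUnique_fin_add_mul hℓ (t j)).unique ⟨s' j, congrFun ht j⟩ ⟨s j, hys j⟩

theorem of_mul_left {π σ : Matrix (Fin n) (Fin n) ℤ} {r : ι → Fin n → ℤ}
    (h : IsRepSystem (π * σ) r) (s : ι → Fin n → ℤ)
    (hs : ∀ i w, π *ᵥ w = r i → s i = w) :
    IsRepSystem σ (fun i : {i // π *ᵥ s i = r i} => s i) := by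
  intro w
  obtain ⟨i, ⟨t, ht⟩, hi⟩ := h (π *ᵥ w)
  have hsi : s i = w - σ *ᵥ t :=
    hs i _ (by rw [mulVec_sub, mulVec_mulVec, ht]; abel)
  refine ⟨⟨i, by rw [hsi, mulVec_sub, mulVec_mulVec, ht]; abel⟩, ⟨t, by simp [hsi]⟩, ?_⟩
  rintro ⟨i', hi'⟩ ⟨t', ht'⟩
  refine Subtype.ext (hi i' ⟨t', ?_⟩)
  rw [ht', mulVec_add, hi', mulVec_mulVec]

end IsRepSystem

theorem exists_add_intCast_eq_intCast_iff {R : Type*} [Ring R] (x : R) (t : ℤ) :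
    (∃ z : ℤ, x + t = z) ↔ ∃ z : ℤ, x = z :=
  ⟨fun ⟨z, hz⟩ => ⟨z - t, by push_cast; rw [← hz]; abel⟩,
    fun ⟨z, hz⟩ => ⟨z + t, by push_cast; rw [hz]⟩⟩

theorem periodicBernoulliQ_add_intCast (k : ℕ) (x : ℚ) (t : ℤ) :
    periodicBernoulliQ k (x + t) = periodicBernoulliQ k x := by
  simp only [periodicBernoulliQ, Int.fract_add_intCast, exists_add_intCast_eq_intCast_iff]

theorem Jset_add_intCast {n : ℕ} (e : Fin n → ℕ) (x : Fin n → ℚ) (t : Fin n → ℤ) :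
    Jset e (fun j => x j + t j) = Jset e x := by
  simp only [Jset, exists_add_intCast_eq_intCast_iff]

theorem BBQ_add_intCast {n m : ℕ} (Q : Matrix (Fin m) (Fin n) ℝ) (e : Fin n → ℕ)
    (x : Fin n → ℚ) (t : Fin n → ℤ) :
    BBQ Q e (fun j => x j + t j) = BBQ Q e x := by
  simp only [BBQ, Jset_add_intCast, periodicBernoulliQ_add_intCast]

theorem Matrix.inv_eq_smul_inv_mul {n K : Type*} [Fintype n] [DecidableEq n] [Field K]
    {A B P : Matrix n n K} {c : K} (hc : c ≠ 0) (hB : IsUnit B.det) (h : P * A = c • B) :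
    A⁻¹ = c⁻¹ • (B⁻¹ * P) := by
  refine inv_eq_left_inv ?_
  rw [smul_mul_assoc, Matrix.mul_assoc, h, mul_smul_comm, nonsing_inv_mul B hB, smul_smul,
    inv_mul_cancel₀ hc, one_smul]

theorem matQ_mulVec_intCast {n : ℕ} (M : Matrix (Fin n) (Fin n) ℤ) (s : Fin n → ℤ) :
    matQ M *ᵥ (fun j => (s j : ℚ)) = fun j => ((M *ᵥ s) j : ℚ) :=
  funext fun j => (RingHom.map_mulVec (Int.castRingHom ℚ) M s j).symm

theorem det_matQ {n : ℕ} (M : Matrix (Fin n) (Fin n) ℤ) : (matQ M).det = M.det :=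
  (RingHom.map_det (Int.castRingHom ℚ) M).symm

theorem matQ_mul {n : ℕ} (M N : Matrix (Fin n) (Fin n) ℤ) : matQ (M * N) = matQ M * matQ N :=
  Matrix.map_mul (f := Int.castRingHom ℚ)

theorem matQ_smul {n : ℕ} (c : ℤ) (M : Matrix (Fin n) (Fin n) ℤ) :
    matQ (c • M) = (c : ℚ) • matQ M := by
  ext i j
  simp only [matQ, map_apply, Matrix.smul_apply, smul_eq_mul, Int.cast_mul]

section PiL

variable {n : ℕ} [NeZero n] {ℓ : ℕ}

def piL (ℓ : ℕ) : Matrix (Fin n) (Fin n) ℤ :=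
  diagonal fun j => if j = 0 then (ℓ : ℤ) else 1

theorem piL_mulVec (w : Fin n → ℤ) :
    piL ℓ *ᵥ w = fun j => if j = 0 then ℓ * w j else w j := by
  funext j
  by_cases hj : j = 0 <;> simp [piL, mulVec_diagonal, hj]

theorem matQ_piL_mulVec (v : Fin n → ℚ) : matQ (piL ℓ) *ᵥ v = piLvec ℓ v := by
  funext j
  by_cases hj : j = 0 <;> simp [piL, matQ, piLvec, mulVec_diagonal, hj]

theorem det_piL : (piL ℓ : Matrix (Fin n) (Fin n) ℤ).det = ℓ := by
  simp [piL, det_diagonal, Finset.prod_ite_eq']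

theorem piL_mul_eq_smul_sigmaL {σ : Matrix (Fin n) (Fin n) ℤ}
    (hrows : ∀ i j, i ≠ 0 → (ℓ : ℤ) ∣ σ i j) : piL ℓ * σ = (ℓ : ℤ) • sigmaL ℓ σ := by
  ext i j
  by_cases hi : i = 0
  · simp [piL, sigmaL, hi]
  · simp [piL, sigmaL, hi, Int.mul_ediv_cancel' (hrows i j hi)]

theorem piL_mulVec_eq_iff (hℓ : ℓ ≠ 0) (w u : Fin n → ℤ) :
    piL ℓ *ᵥ w = u ↔ (ℓ : ℤ) ∣ u 0 ∧ w = fun j => if j = 0 then u 0 / ℓ else u j := by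
  rw [piL_mulVec]
  constructor
  · rintro rfl
    refine ⟨dvd_mul_right _ _, funext fun j => ?_⟩
    by_cases hj : j = 0
    · subst hj; simp [Int.mul_ediv_cancel_left _ (Int.natCast_ne_zero.mpr hℓ)]
    · simp [hj]
  · rintro ⟨hdvd, rfl⟩
    funext j
    by_cases hj : j = 0
    · subst hj; simp [Int.mul_ediv_cancel' hdvd]
    · simp [hj]

end PiL

section SigmaL

variable {n : ℕ} [NeZero n] {ℓ : ℕ} {σ : Matrix (Fin n) (Fin n) ℤ}

theorem det_sigmaL_ne_zero (hℓ : ℓ ≠ 0) (hrows : ∀ i j, i ≠ 0 → (ℓ : ℤ) ∣ σ i j)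
    (hdet : σ.det ≠ 0) : (sigmaL ℓ σ).det ≠ 0 := by
  intro h
  have := congrArg det (piL_mul_eq_smul_sigmaL hrows)
  rw [det_mul, det_smul, h, mul_zero, det_piL] at this
  exact mul_ne_zero (by exact_mod_cast hℓ) hdet this

theorem inv_matQ_eq (hℓ : ℓ ≠ 0) (hrows : ∀ i j, i ≠ 0 → (ℓ : ℤ) ∣ σ i j)
    (hdet : σ.det ≠ 0) :
    (matQ σ)⁻¹ = (ℓ : ℚ)⁻¹ • ((matQ (sigmaL ℓ σ))⁻¹ * matQ (piL ℓ)) := by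
  refine Matrix.inv_eq_smul_inv_mul (by exact_mod_cast hℓ) ?_ ?_
  · rw [det_matQ, isUnit_iff_ne_zero]
    exact_mod_cast det_sigmaL_ne_zero hℓ hrows hdet
  · rw [← matQ_mul, piL_mul_eq_smul_sigmaL hrows, matQ_smul, Int.cast_natCast]

theorem inv_matQ_mulVec_eq (hℓ : ℓ ≠ 0) (hrows : ∀ i j, i ≠ 0 → (ℓ : ℤ) ∣ σ i j)
    (hdet : σ.det ≠ 0) {w x y : Fin n → ℤ} (hw : piL ℓ *ᵥ w = x + sigmaL ℓ σ *ᵥ y)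
    (v : Fin n → ℚ) :
    (matQ σ)⁻¹ *ᵥ (fun j => (w j : ℚ) + v j) = fun j =>
      (((matQ (sigmaL ℓ σ))⁻¹ *ᵥ (fun j => (x j : ℚ) + piLvec ℓ v j)) j + y j) / ℓ := by
  set B := matQ (sigmaL ℓ σ)
  have hB : IsUnit B.det := by
    rw [det_matQ, isUnit_iff_ne_zero]
    exact_mod_cast det_sigmaL_ne_zero hℓ hrows hdet
  have hwq : matQ (piL ℓ) *ᵥ (fun j => (w j : ℚ)) =
      (fun j => (x j : ℚ)) + B *ᵥ fun j => (y j : ℚ) := by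
    rw [matQ_mulVec_intCast, matQ_mulVec_intCast, hw]
    funext j
    simp only [Pi.add_apply, Int.cast_add]
  calc (matQ σ)⁻¹ *ᵥ (fun j => (w j : ℚ) + v j)
      = (ℓ : ℚ)⁻¹ • B⁻¹ *ᵥ (matQ (piL ℓ) *ᵥ (fun j => (w j : ℚ)) + matQ (piL ℓ) *ᵥ v) := by
        rw [inv_matQ_eq hℓ hrows hdet, smul_mulVec, ← mulVec_mulVec, ← mulVec_add]
        rfl
    _ = (ℓ : ℚ)⁻¹ • (B⁻¹ *ᵥ (fun j => (x j : ℚ) + piLvec ℓ v j) + fun j => (y j : ℚ)) := by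
        rw [hwq, matQ_piL_mulVec, add_right_comm, mulVec_add, mulVec_mulVec,
          nonsing_inv_mul B hB, one_mulVec]
        rfl
    _ = _ := by
        funext j
        simp only [Pi.smul_apply, Pi.add_apply, smul_eq_mul]
        ring

end SigmaL

theorem sum_eq_neg_iff_dvd_add_sigmaL_mulVec {n : ℕ} [NeZero n] (ℓ : ℕ)
    (σ : Matrix (Fin n) (Fin n) ℤ) (x : Fin n → ℤ) (y : Fin n → ℕ) :
    ∑ j, ((σ 0 j : ℤ) : ZMod ℓ) * ((y j : ℕ) : ZMod ℓ) = -((x 0 : ℤ) : ZMod ℓ) ↔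
      (ℓ : ℤ) ∣ (x + sigmaL ℓ σ *ᵥ fun j => (y j : ℤ)) 0 := by
  rw [← ZMod.intCast_zmod_eq_zero_iff_dvd, eq_neg_iff_add_eq_zero, add_comm]
  simp [mulVec, dotProduct, sigmaL]

theorem BBQ_inv_matQ_mulVec_add_mulVec {n m : ℕ} {σ : Matrix (Fin n) (Fin n) ℤ}
    (hdet : σ.det ≠ 0) (Q : Matrix (Fin m) (Fin n) ℝ) (e : Fin n → ℕ) (v : Fin n → ℚ)
    (w t : Fin n → ℤ) :
    BBQ Q e ((matQ σ)⁻¹ *ᵥ fun j => ((w + σ *ᵥ t) j : ℚ) + v j) =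
      BBQ Q e ((matQ σ)⁻¹ *ᵥ fun j => (w j : ℚ) + v j) := by
  have hA : IsUnit (matQ σ).det := by
    rw [det_matQ, isUnit_iff_ne_zero]
    exact_mod_cast hdet
  have hshift : (fun j => ((w + σ *ᵥ t) j : ℚ) + v j) =
      (fun j => (w j : ℚ) + v j) + matQ σ *ᵥ fun j => (t j : ℚ) := by
    rw [matQ_mulVec_intCast]
    funext j
    simp only [Pi.add_apply, Int.cast_add]
    ring
  rw [hshift, mulVec_add, mulVec_mulVec, nonsing_inv_mul _ hA, one_mulVec]
  exact BBQ_add_intCast Q e _ t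

theorem sum_ite_BBQ_eq_sum_BBQ {n m : ℕ} [NeZero n] {ℓ : ℕ} {σ : Matrix (Fin n) (Fin n) ℤ}
    {ι κ : Type} [Fintype ι] [Fintype κ] (hℓ : ℓ ≠ 0) (hdet : σ.det ≠ 0)
    (hrows : ∀ i j, i ≠ 0 → (ℓ : ℤ) ∣ σ i j) (Q : Matrix (Fin m) (Fin n) ℝ) (e : Fin n → ℕ)
    (v : Fin n → ℚ) {reps₁ : ι → Fin n → ℤ} (h₁ : IsRepSystem (sigmaL ℓ σ) reps₁)
    {reps₂ : κ → Fin n → ℤ} (h₂ : IsRepSystem σ reps₂) :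
    ∑ i, ∑ y : Fin n → Fin ℓ,
      (if ∑ j, ((σ 0 j : ℤ) : ZMod ℓ) * ((y j : ℕ) : ZMod ℓ) = -((reps₁ i 0 : ℤ) : ZMod ℓ) then
        BBQ Q e (fun j => (((matQ (sigmaL ℓ σ))⁻¹ *ᵥ
          (fun j => ((reps₁ i j : ℤ) : ℚ) + piLvec ℓ v j)) j + ((y j : ℕ) : ℚ)) / ℓ)
      else 0)
    = ∑ k, BBQ Q e ((matQ σ)⁻¹ *ᵥ fun j => ((reps₂ k j : ℤ) : ℚ) + v j) := by
  set Φ : ι × (Fin n → Fin ℓ) → Fin n → ℤ :=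
    fun p => reps₁ p.1 + sigmaL ℓ σ *ᵥ fun j => ((p.2 j : ℕ) : ℤ)
  -- `s p` is the preimage of `Φ p` under `π_ℓ` whenever there is one
  set s : ι × (Fin n → Fin ℓ) → Fin n → ℤ :=
    fun p j => if j = 0 then Φ p 0 / ℓ else Φ p j
  set g : (Fin n → ℤ) → ℚ := fun w => BBQ Q e ((matQ σ)⁻¹ *ᵥ fun j => (w j : ℚ) + v j)
  have hΦ : IsRepSystem (piL ℓ * σ) Φ := by
    rw [piL_mul_eq_smul_sigmaL hrows]
    refine h₁.smul_digits (mulVec_injective_of_det_mem_nonZeroDivisors ?_) hℓ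
    exact mem_nonZeroDivisors_of_ne_zero (det_sigmaL_ne_zero hℓ hrows hdet)
  have hs : IsRepSystem σ (fun p : {p // piL ℓ *ᵥ s p = Φ p} => s p) :=
    hΦ.of_mul_left s fun p w hw => ((piL_mulVec_eq_iff hℓ w (Φ p)).mp hw).2.symm
  have hcond : ∀ p : ι × (Fin n → Fin ℓ),
      (∑ j, ((σ 0 j : ℤ) : ZMod ℓ) * ((p.2 j : ℕ) : ZMod ℓ) = -((reps₁ p.1 0 : ℤ) : ZMod ℓ)) ↔
        piL ℓ *ᵥ s p = Φ p := fun p => by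
    rw [piL_mulVec_eq_iff hℓ, and_iff_left rfl, sum_eq_neg_iff_dvd_add_sigmaL_mulVec]
  calc _ = ∑ p ∈ Finset.univ.filter fun p => piL ℓ *ᵥ s p = Φ p, g (s p) := by
        rw [Finset.sum_filter, ← Fintype.sum_prod_type']
        refine Fintype.sum_congr _ _ fun p => ?_
        simp only [hcond]
        split_ifs with hp
        · simp only [g]
          rw [inv_matQ_mulVec_eq hℓ hrows hdet hp]
          simp
        · rfl
    _ = ∑ p : {p // piL ℓ *ᵥ s p = Φ p}, g (s p) := Finset.sum_subtype _ (by simp) _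
    _ = ∑ k, g (reps₂ k) := hs.sum_eq h₂ (BBQ_inv_matQ_mulVec_add_mulVec hdet Q e v)

theorem PsiL_eq_BBLz_sum_general {n m : ℕ} [NeZero n] (ℓ : ℕ) (hℓ : ℓ.Prime)
    (σ : Matrix (Fin n) (Fin n) ℤ) (hdet : σ.det ≠ 0)
    (hrows : ∀ i j, i ≠ (0 : Fin n) → (ℓ : ℤ) ∣ σ i j)
    (Q : Matrix (Fin m) (Fin n) ℝ)
    (P : MvPolynomial (Fin n) ℚ) (d : ℕ)
    (v : Fin n → ℚ)
    {ι κ : Type} [Fintype ι] [Fintype κ]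
    (reps₁ : ι → Fin n → ℤ) (h₁ : IsRepSystem (sigmaL ℓ σ) reps₁)
    (reps₂ : κ → Fin n → ℤ) (h₂ : IsRepSystem σ reps₂) :
    PsiL ℓ σ P d Q v reps₁ reps₂
      = (-1 : ℚ) ^ n * ((σ.det.sign : ℤ) : ℚ) *
          ∑ r ∈ Fintype.piFinset (fun _ : Fin n => Finset.range (d + 1)),
            if (∑ j, r j) = d then
              Pcoeff σ P r /
                  (((∏ j, Nat.factorial (r j + 1) : ℕ) : ℚ) * (ℓ : ℚ) ^ (∑ j, r j)) *
                ∑ i : ι, BBLz ℓ (fun j => σ 0 j) (Qtransf σ Q) (fun j => 1 + r j)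
                  (-((reps₁ i 0 : ℤ) : ZMod ℓ))
                  ((matQ (sigmaL ℓ σ))⁻¹.mulVec
                    (fun j => ((reps₁ i j : ℤ) : ℚ) + piLvec ℓ v j))
            else 0 := by
  unfold PsiL
  congr 1
  refine Finset.sum_congr rfl fun r _ => ?_
  split_ifs
  · simp only [Dl, BBLz, Finset.sum_sub_distrib, ← Finset.mul_sum]
    rw [sum_ite_BBQ_eq_sum_BBQ hℓ.ne_zero hdet hrows _ _ v h₁ h₂]
  · rfl

/-- Explicit formula for the smoothed cocycle:
`Ψ_ℓ(σ,P,Q,v) = (−1)^n sign(det σ) Σ_r P_r(σ)/((r+𝟙)!ℓ^{|r|})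
  Σ_{x∈ℤ^n/σ_ℓℤ^n} 𝐁_{𝟙+r}^{L,−x̄₁}(σ_ℓ⁻¹(x+π_ℓ v), σ⁻¹Q)`. -/
theorem PsiL_eq_BBLz_sum {n m : ℕ} [NeZero n] (ℓ : ℕ) (hℓ : ℓ.Prime)
    (σ : Matrix (Fin n) (Fin n) ℤ) (hdet : σ.det ≠ 0)
    (hrows : ∀ i j, i ≠ (0 : Fin n) → (ℓ : ℤ) ∣ σ i j)
    (hrow0 : ∀ j, IsCoprime (σ 0 j) (ℓ : ℤ))
    (Q : Matrix (Fin m) (Fin n) ℝ)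
    (hQ : ∀ i, ∀ w : Fin n → ℚ, w ≠ 0 → (∑ j, Q i j * (w j : ℝ)) ≠ 0)
    (P : MvPolynomial (Fin n) ℚ) (d : ℕ) (hP : P.IsHomogeneous d)
    (v : Fin n → ℚ)
    {ι κ : Type} [Fintype ι] [Fintype κ]
    (reps₁ : ι → Fin n → ℤ) (h₁ : IsRepSystem (sigmaL ℓ σ) reps₁)
    (reps₂ : κ → Fin n → ℤ) (h₂ : IsRepSystem σ reps₂) :
    PsiL ℓ σ P d Q v reps₁ reps₂
      = (-1 : ℚ) ^ n * ((σ.det.sign : ℤ) : ℚ) *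
          ∑ r ∈ Fintype.piFinset (fun _ : Fin n => Finset.range (d + 1)),
            if (∑ j, r j) = d then
              Pcoeff σ P r /
                  (((∏ j, Nat.factorial (r j + 1) : ℕ) : ℚ) * (ℓ : ℚ) ^ (∑ j, r j)) *
                ∑ i : ι, BBLz ℓ (fun j => σ 0 j) (Qtransf σ Q) (fun j => 1 + r j)
                  (-((reps₁ i 0 : ℤ) : ZMod ℓ))
                  ((matQ (sigmaL ℓ σ))⁻¹.mulVec
                    (fun j => ((reps₁ i j : ℤ) : ℚ) + piLvec ℓ v j))
            else 0 :=
  PsiL_eq_BBLz_sum_general ℓ hℓ σ hdet hrows Q P d v reps₁ h₁ reps₂ h₂
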